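/- Let p be a prime, A a commutative ring and 𝔞 ⊆ A an ideal such that A is 𝔞-adically complete and separated and A/𝔞 is a perfect ring of characteristic p. For each n ≥ 1, the quotient A/𝔞ⁿ with the nilpotent ideal 𝔞/𝔞ⁿ satisfies the same hypotheses. Let 𝕎 ⊆ W(A) and, for each n, 𝕎ₙ ⊆ W(A/𝔞ⁿ) be subrings satisfying the three characterizing conditions (stability under Frobenius; intersection with W(𝔞) resp. W(𝔞/𝔞ⁿ) equals Ŵ(𝔞) resp. Ŵ(𝔞/𝔞ⁿ); surjection onto W(A/𝔞)). Then an element x ∈ W(A) lies in 𝕎 if and only if for every n ≥ 1 the image of x in W(A/𝔞ⁿ) lies in 𝕎ₙ; i.e. 𝕎 = lim_n 𝕎ₙ inside W(A) = lim_n W(A/𝔞ⁿ). -/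

import Mathlib

/-- A subring `S ⊆ W(B)` satisfies the three characterizing conditions with respect to an
ideal `𝔟 ⊆ B`: stability under Frobenius, `S ∩ W(𝔟) = Ŵ(𝔟)`, and surjection onto
`W(B/𝔟)`. -/
def IsSpecialWittSubring (p : ℕ) [Fact p.Prime] {B : Type*} [CommRing B]
    (𝔟 : Ideal B) (S : Subring (WittVector p B)) : Prop :=
  (∀ x ∈ S, WittVector.frobenius x ∈ S) ∧
  ((S : Set (WittVector p B)) ∩ {x | ∀ n, x.coeff n ∈ 𝔟} =
    {x | (∀ n, x.coeff n ∈ 𝔟) ∧ ∀ k, {n | x.coeff n ∉ 𝔟 ^ k}.Finite}) ∧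
  (∀ y : WittVector p (B ⧸ 𝔟), ∃ x ∈ S, WittVector.map (Ideal.Quotient.mk 𝔟) x = y)


/-!
Since `p ∈ 𝔞`, the Frobenius improves congruences modulo powers of `𝔞` by one step, so over
`A/𝔞ⁿ` the `n`-th Frobenius iterate of a Witt vector depends only on its reduction modulo
`𝔞/𝔞ⁿ`; lifting that reduction to `𝕎ₙ` shows that every `n`-th Frobenius iterate lies in `𝕎ₙ`.
As `A/𝔞` is perfect, every `x ∈ 𝕎` can be written `d + Fⁿ u` with `u ∈ 𝕎` and
`d ∈ 𝕎 ∩ W(𝔞) = Ŵ(𝔞)`, and reduction carries `Ŵ(𝔞)` into `Ŵ(𝔞/𝔞ⁿ) ⊆ 𝕎ₙ`.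
Conversely, lift the reduction of `x` modulo `𝔞` to `u ∈ 𝕎`: then `d = x - u ∈ W(𝔞)`, and
`d` reducing into `𝕎ₙ ∩ W(𝔞/𝔞ⁿ) = Ŵ(𝔞/𝔞ⁿ)` for every `n` says that only finitely many
components of `d` lie outside `𝔞ⁿ`, i.e. `d ∈ Ŵ(𝔞) ⊆ 𝕎`.
-/

open WittVector

theorem Ideal.pow_sub_pow_mem_pow_succ {R : Type*} [CommRing R] {I : Ideal R} {n m : ℕ}
    {a b : R} (hn : (n : R) ∈ I) (hab : a - b ∈ I) (habm : a - b ∈ I ^ m) :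
    a ^ n - b ^ n ∈ I ^ (m + 1) := by
  have hgeom : ∑ i ∈ Finset.range n, a ^ i * b ^ (n - 1 - i) ∈ I := by
    rw [← Ideal.Quotient.eq_zero_iff_mem, RingHom.map_geom_sum₂, Ideal.Quotient.eq.mpr hab,
      geom_sum₂_self, ← map_natCast (Ideal.Quotient.mk I), Ideal.Quotient.eq_zero_iff_mem.mpr hn,
      zero_mul]
  rw [← geom_sum₂_mul, pow_succ']
  exact Ideal.mul_mem_mul hgeom habm

theorem MvPolynomial.aeval_sub_aeval_mem {σ R : Type*} [CommRing R] {I : Ideal R}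
    (P : MvPolynomial σ ℤ) {a b : σ → R} (h : ∀ i, a i - b i ∈ I) :
    aeval a P - aeval b P ∈ I := by
  have hmk : ∀ c : σ → R, Ideal.Quotient.mk I (aeval c P) = aeval (Ideal.Quotient.mk I ∘ c) P :=
    fun c => comp_aeval_apply (f := c) (Ideal.Quotient.mk I).toIntAlgHom P
  have hab : Ideal.Quotient.mk I ∘ a = Ideal.Quotient.mk I ∘ b := by
    ext i
    exact Ideal.Quotient.eq.mpr (h i)
  rw [← Ideal.Quotient.eq, hmk, hmk, hab]

namespace WittVector

variable {p : ℕ} [Fact p.Prime] {R S : Type*} [CommRing R] [CommRing S]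

theorem map_frobenius (g : R →+* S) (x : WittVector p R) :
    map g (frobenius x) = frobenius (map g x) := by
  ext n
  rw [map_coeff, coeff_frobenius, coeff_frobenius]
  exact MvPolynomial.comp_aeval_apply (f := x.coeff) g.toIntAlgHom _

theorem map_iterate_frobenius (g : R →+* S) (k : ℕ) (x : WittVector p R) :
    map g (frobenius^[k] x) = frobenius^[k] (map g x) :=
  Function.Semiconj.iterate_right (map_frobenius g) k x

theorem map_mk_eq_zero_iff {I : Ideal R} {x : WittVector p R} :
    map (Ideal.Quotient.mk I) x = 0 ↔ ∀ n, x.coeff n ∈ I := by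
  simp only [map_eq_zero_iff, Ideal.Quotient.eq_zero_iff_mem]

theorem coeff_frobenius_sub_mem_pow_succ {I : Ideal R} (hp : (p : R) ∈ I) {m : ℕ}
    {x y : WittVector p R} (h : ∀ n, x.coeff n - y.coeff n ∈ I ^ (m + 1)) (n : ℕ) :
    (frobenius x).coeff n - (frobenius y).coeff n ∈ I ^ (m + 2) := by
  have hI : ∀ n, x.coeff n - y.coeff n ∈ I := fun n => Ideal.pow_le_self m.succ_ne_zero (h n)
  rw [coeff_frobenius, coeff_frobenius, frobeniusPoly]
  simp only [map_add, map_mul, map_pow, MvPolynomial.aeval_X, map_natCast]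
  rw [add_sub_add_comm, ← mul_sub]
  refine Ideal.add_mem _ (Ideal.pow_sub_pow_mem_pow_succ hp (hI n) (h n)) ?_
  rw [pow_succ']
  exact Ideal.mul_mem_mul hp (MvPolynomial.aeval_sub_aeval_mem _ h)

theorem coeff_iterate_frobenius_sub_mem_pow {I : Ideal R} (hp : (p : R) ∈ I)
    {x y : WittVector p R} (h : ∀ n, x.coeff n - y.coeff n ∈ I) (k n : ℕ) :
    (frobenius^[k] x).coeff n - (frobenius^[k] y).coeff n ∈ I ^ (k + 1) := by
  induction k generalizing n with
  | zero => simpa using h n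
  | succ k ih =>
    rw [Function.iterate_succ_apply', Function.iterate_succ_apply']
    exact coeff_frobenius_sub_mem_pow_succ hp ih n

end WittVector

namespace IsSpecialWittSubring

variable {p : ℕ} [Fact p.Prime] {A B : Type*} [CommRing A] [CommRing B] {𝔞 : Ideal A}
  {𝔟 : Ideal B} {S : Subring (WittVector p A)} {T : Subring (WittVector p B)}

theorem iterate_frobenius_mem (hS : IsSpecialWittSubring p 𝔞 S) (k : ℕ) {x : WittVector p A}
    (hx : x ∈ S) : frobenius^[k] x ∈ S := by
  induction k with
  | zero => exact hx
  | succ k ih => exact Function.iterate_succ_apply' frobenius k x ▸ hS.1 _ ih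

theorem mem_iff_finite (hS : IsSpecialWittSubring p 𝔞 S) {x : WittVector p A}
    (hx : ∀ n, x.coeff n ∈ 𝔞) : x ∈ S ↔ ∀ k, {n | x.coeff n ∉ 𝔞 ^ k}.Finite := by
  have := Set.ext_iff.mp hS.2.1 x
  simp only [Set.mem_inter_iff, SetLike.mem_coe, Set.mem_ofPred_eq] at this
  simpa [hx] using this

/-- `Fᵏ x = Fᵏ z` for a lift `z ∈ T` of the reduction of `x` modulo `𝔟`, as the two agree
modulo `𝔟 ^ (k + 1) = 0`. -/
theorem iterate_frobenius_mem_of_pow_eq_bot (hT : IsSpecialWittSubring p 𝔟 T)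
    (hp : (p : B) ∈ 𝔟) {k : ℕ} (h𝔟 : 𝔟 ^ k = ⊥) (x : WittVector p B) :
    frobenius^[k] x ∈ T := by
  obtain ⟨z, hzT, hzx⟩ := hT.2.2 (map (Ideal.Quotient.mk 𝔟) x)
  have hcoeff : ∀ n, z.coeff n - x.coeff n ∈ 𝔟 := fun n =>
    Ideal.Quotient.eq.mp (by simpa only [map_coeff] using congrArg (coeff · n) hzx)
  have heq : frobenius^[k] z = frobenius^[k] x := by
    ext n
    have hmem := coeff_iterate_frobenius_sub_mem_pow hp hcoeff k n
    rw [← sub_eq_zero, ← Ideal.mem_bot, ← h𝔟]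
    exact Ideal.pow_le_pow_right k.le_succ hmem
  exact heq ▸ hT.iterate_frobenius_mem k hzT

theorem exists_mem_map_mk_iterate_frobenius_eq [CharP (A ⧸ 𝔞) p] [PerfectRing (A ⧸ 𝔞) p]
    (hS : IsSpecialWittSubring p 𝔞 S) (k : ℕ) (x : WittVector p A) :
    ∃ u ∈ S, map (Ideal.Quotient.mk 𝔞) (frobenius^[k] u) = map (Ideal.Quotient.mk 𝔞) x := by
  obtain ⟨z, hz⟩ := ((frobenius_bijective p (A ⧸ 𝔞)).surjective.iterate k)
    (map (Ideal.Quotient.mk 𝔞) x)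
  obtain ⟨u, huS, hu⟩ := hS.2.2 z
  exact ⟨u, huS, by rw [map_iterate_frobenius, hu, hz]⟩

theorem map_mem_of_coeff_mem (hS : IsSpecialWittSubring p 𝔞 S)
    (hT : IsSpecialWittSubring p 𝔟 T) {g : A →+* B} (hg : 𝔞.map g ≤ 𝔟) {x : WittVector p A}
    (hxS : x ∈ S) (hx : ∀ n, x.coeff n ∈ 𝔞) : map g x ∈ T := by
  have hgx : ∀ n, (map g x).coeff n ∈ 𝔟 := fun n => hg (Ideal.mem_map_of_mem g (hx n))
  refine (hT.mem_iff_finite hgx).mpr fun j => ((hS.mem_iff_finite hx).mp hxS j).subset ?_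
  intro n hn hxn
  exact hn (Ideal.pow_right_mono hg j (Ideal.map_pow g 𝔞 j ▸ Ideal.mem_map_of_mem g hxn))

theorem map_mem [CharP (A ⧸ 𝔞) p] [PerfectRing (A ⧸ 𝔞) p] (hS : IsSpecialWittSubring p 𝔞 S)
    (hT : IsSpecialWittSubring p 𝔟 T) {g : A →+* B} (hg : 𝔞.map g ≤ 𝔟) {k : ℕ}
    (h𝔟 : 𝔟 ^ k = ⊥) {x : WittVector p A} (hx : x ∈ S) : map g x ∈ T := by
  have hp𝔞 : (p : A) ∈ 𝔞 := by
    rw [← Ideal.Quotient.eq_zero_iff_mem, map_natCast, CharP.cast_eq_zero]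
  have hp𝔟 : (p : B) ∈ 𝔟 := map_natCast g p ▸ hg (Ideal.mem_map_of_mem g hp𝔞)
  obtain ⟨u, huS, hu⟩ := hS.exists_mem_map_mk_iterate_frobenius_eq k x
  have hd : ∀ n, (x - frobenius^[k] u).coeff n ∈ 𝔞 :=
    map_mk_eq_zero_iff.mp (by rw [map_sub, hu, sub_self])
  have hdT := hS.map_mem_of_coeff_mem hT hg (sub_mem hx (hS.iterate_frobenius_mem k huS)) hd
  have hFuT : map g (frobenius^[k] u) ∈ T := by
    rw [map_iterate_frobenius]
    exact hT.iterate_frobenius_mem_of_pow_eq_bot hp𝔟 h𝔟 _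
  simpa using add_mem hdT hFuT

theorem finite_coeff_notMem_pow {k : ℕ} {T : Subring (WittVector p (A ⧸ 𝔞 ^ k))}
    (hT : IsSpecialWittSubring p (𝔞.map (Ideal.Quotient.mk (𝔞 ^ k))) T) {x : WittVector p A}
    (hx : ∀ n, x.coeff n ∈ 𝔞) (hxT : map (Ideal.Quotient.mk (𝔞 ^ k)) x ∈ T) :
    {n | x.coeff n ∉ 𝔞 ^ k}.Finite := by
  have hmap : ∀ n, (map (Ideal.Quotient.mk (𝔞 ^ k)) x).coeff n ∈ 𝔞.map (Ideal.Quotient.mk _) :=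
    fun n => Ideal.mem_map_of_mem _ (hx n)
  convert (hT.mem_iff_finite hmap).mp hxT k using 4 with n
  rw [map_coeff, ← Ideal.map_pow, Ideal.mem_quotient_iff_mem le_rfl]

end IsSpecialWittSubring

theorem special_subring_eq_limit_general
    (p : ℕ) [Fact p.Prime] (A : Type*) [CommRing A] (𝔞 : Ideal A)
    [CharP (A ⧸ 𝔞) p] [PerfectRing (A ⧸ 𝔞) p]
    (𝕎 : Subring (WittVector p A))
    (h𝕎 : IsSpecialWittSubring p 𝔞 𝕎)
    (𝕎ₙ : ∀ n : ℕ, Subring (WittVector p (A ⧸ 𝔞 ^ n)))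
    (h𝕎ₙ : ∀ n : ℕ, 1 ≤ n →
      IsSpecialWittSubring p (𝔞.map (Ideal.Quotient.mk (𝔞 ^ n))) (𝕎ₙ n)) :
    ∀ x : WittVector p A, x ∈ 𝕎 ↔
      ∀ n : ℕ, 1 ≤ n →
        WittVector.map (Ideal.Quotient.mk (𝔞 ^ n)) x ∈ 𝕎ₙ n := by
  have hmap : ∀ n, 1 ≤ n → ∀ x ∈ 𝕎, map (Ideal.Quotient.mk (𝔞 ^ n)) x ∈ 𝕎ₙ n :=
    fun n hn x hx => h𝕎.map_mem (h𝕎ₙ n hn) le_rfl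
      (by rw [← Ideal.map_pow, Ideal.map_quotient_self]) hx
  refine fun x => ⟨fun hx n hn => hmap n hn x hx, fun hx => ?_⟩
  obtain ⟨u, huW, hu⟩ := h𝕎.2.2 (map (Ideal.Quotient.mk 𝔞) x)
  have hd : ∀ n, (x - u).coeff n ∈ 𝔞 := map_mk_eq_zero_iff.mp (by rw [map_sub, hu, sub_self])
  have hdW : x - u ∈ 𝕎 := by
    refine (h𝕎.mem_iff_finite hd).mpr fun k => ?_
    rcases Nat.eq_zero_or_pos k with rfl | hk
    · simp
    · refine IsSpecialWittSubring.finite_coeff_notMem_pow (h𝕎ₙ k hk) hd ?_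
      rw [map_sub]
      exact sub_mem (hx k hk) (hmap k hk u huW)
  simpa using add_mem huW hdW

/-- With `A` admissible for `𝔞`, let `𝕎 ⊆ W(A)` and, for each `n ≥ 1`,
`𝕎ₙ ⊆ W(A/𝔞ⁿ)` be subrings satisfying the three characterizing conditions (with respect
to `𝔞` resp. `𝔞/𝔞ⁿ`).  Then `x ∈ 𝕎` iff for every `n ≥ 1` the image of `x` in
`W(A/𝔞ⁿ)` lies in `𝕎ₙ`; i.e. `𝕎 = lim_n 𝕎ₙ`. -/
theorem special_subring_eq_limit
    (p : ℕ) [Fact p.Prime] (A : Type*) [CommRing A] (𝔞 : Ideal A)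
    [IsAdicComplete 𝔞 A] [CharP (A ⧸ 𝔞) p] [PerfectRing (A ⧸ 𝔞) p]
    (𝕎 : Subring (WittVector p A))
    (h𝕎 : IsSpecialWittSubring p 𝔞 𝕎)
    (𝕎ₙ : ∀ n : ℕ, Subring (WittVector p (A ⧸ 𝔞 ^ n)))
    (h𝕎ₙ : ∀ n : ℕ, 1 ≤ n →
      IsSpecialWittSubring p (𝔞.map (Ideal.Quotient.mk (𝔞 ^ n))) (𝕎ₙ n)) :
    ∀ x : WittVector p A, x ∈ 𝕎 ↔
      ∀ n : ℕ, 1 ≤ n →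
        WittVector.map (Ideal.Quotient.mk (𝔞 ^ n)) x ∈ 𝕎ₙ n :=
  special_subring_eq_limit_general p A 𝔞 𝕎 h𝕎 𝕎ₙ h𝕎ₙ
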